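/- arXiv:2410.20697 — 7 statements merged into one kernel-verified Lean document; each statement's English description precedes it below -/
import Mathlib

section
/- Let v1 and v2 be nonempty closed convex subsets of ℝ³ (EuclideanSpace ℝ (Fin 3)) with v1 ∩ v2 ≠ ∅, let f : ℝ → ℝ be a shaping function that additionally satisfies f(t) > 0 for all t > 0, and let α ∈ [0,1]. Then the interpolated object v^α_{v1→v2} = {x | (1−α)·f(SDF_{v1}(x)) + α·f(SDF_{v2}(x)) ≤ 0} is a convex set and satisfies v1 ∩ v2 ⊆ v^α_{v1→v2} ⊆ v1 ∪ v2. -/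
/-- Signed distance function of a set `v`. -/
noncomputable def sdf (v : Set (EuclideanSpace ℝ (Fin 3)))
    (x : EuclideanSpace ℝ (Fin 3)) : ℝ :=
  Metric.infDist x v - Metric.infDist x vᶜ

/-!
For closed convex `s`, the signed distance `SDF_s` is the supremum of the affine functions
`⟪w, ·⟫ - c` over the halfspaces `{⟪w, ·⟫ ≤ c} ⊇ s` with unit normal `w`, hence convex: the
supremum at `x` is approached by the halfspace supporting `s` at the metric projection of a point
outside `s` close to `x` (of `x` itself if `x ∉ s`). Composing with the monotone convex `f` and
averaging keeps convexity, so the interpolated object is a sublevel set of a convex function.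
On `v1 ∩ v2` both terms are at most `f 0 = 0`; off `v1 ∪ v2` both are positive.
-/

open Metric Set
open scoped RealInnerProductSpace

theorem convexOn_univ_of_forall_exists_affine_minorant {E : Type*} [AddCommGroup E] [Module ℝ E]
    {φ : E → ℝ} (h : ∀ x, ∀ ε > 0, ∃ g : E →ᵃ[ℝ] ℝ, (∀ y, g y ≤ φ y) ∧ φ x ≤ g x + ε) :
    ConvexOn ℝ univ φ := by
  refine ⟨convex_univ, fun x _ y _ a b ha hb hab => le_of_forall_pos_le_add fun ε hε => ?_⟩
  obtain ⟨g, hgφ, hg⟩ := h (a • x + b • y) ε hε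
  rw [Convex.combo_affine_apply hab] at hg
  simp only [smul_eq_mul] at hg ⊢
  linarith [mul_le_mul_of_nonneg_left (hgφ x) ha, mul_le_mul_of_nonneg_left (hgφ y) hb]

theorem ConvexOn.monotone_comp {E : Type*} [AddCommGroup E] [Module ℝ E] {s : Set E}
    {φ : E → ℝ} {g : ℝ → ℝ} (hg : ConvexOn ℝ univ g) (hg' : Monotone g) (hφ : ConvexOn ℝ s φ) :
    ConvexOn ℝ s (g ∘ φ) :=
  ⟨hφ.1, fun _ hx _ hy _ _ ha hb hab =>
    (hg' (hφ.2 hx hy ha hb hab)).trans (hg.2 trivial trivial ha hb hab)⟩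

section Metric

variable {X : Type*} [MetricSpace X] {s : Set X} {x : X}

theorem infDist_sub_infDist_compl_nonpos_of_mem (hx : x ∈ s) :
    infDist x s - infDist x sᶜ ≤ 0 := by
  rw [infDist_zero_of_mem hx, zero_sub, neg_nonpos]
  exact infDist_nonneg

theorem infDist_sub_infDist_compl_pos_of_notMem (hs : s.Nonempty) (hcl : IsClosed s)
    (hx : x ∉ s) : 0 < infDist x s - infDist x sᶜ := by
  rw [infDist_zero_of_mem (mem_compl hx), sub_zero]
  exact (hcl.notMem_iff_infDist_pos hs).mp hx

end Metric

section InnerProductSpace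

variable {E : Type*} [NormedAddCommGroup E] [InnerProductSpace ℝ E] {s : Set E}

theorem le_infDist_sub_infDist_compl_of_forall_inner_le (hs : s.Nonempty) {w : E}
    (hw : ‖w‖ = 1) {c : ℝ} (hsc : ∀ a ∈ s, ⟪w, a⟫ ≤ c) (x : E) :
    ⟪w, x⟫ - c ≤ infDist x s - infDist x sᶜ := by
  by_cases hx : x ∈ s
  · -- moving from `x` along `w` by more than `c - ⟪w, x⟫` leaves `s`
    have hcompl : infDist x sᶜ ≤ c - ⟪w, x⟫ := by
      refine le_of_forall_pos_le_add fun ε hε => ?_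
      have hout : x + (c - ⟪w, x⟫ + ε) • w ∈ sᶜ := by
        intro hin
        have := hsc _ hin
        rw [inner_add_right, real_inner_smul_right, real_inner_self_eq_norm_sq, hw] at this
        linarith
      calc infDist x sᶜ ≤ dist x (x + (c - ⟪w, x⟫ + ε) • w) := infDist_le_dist_of_mem hout
        _ = c - ⟪w, x⟫ + ε := by
          rw [dist_self_add_right, norm_smul, hw, mul_one, Real.norm_of_nonneg]
          linarith [hsc x hx]
    rw [infDist_zero_of_mem hx]
    linarith
  · rw [infDist_zero_of_mem (mem_compl hx), sub_zero, le_infDist hs]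
    intro a ha
    calc ⟪w, x⟫ - c ≤ ⟪w, x - a⟫ := by rw [inner_sub_right]; linarith [hsc a ha]
      _ ≤ ‖x - a‖ := by simpa [hw] using real_inner_le_norm w (x - a)
      _ = dist x a := (dist_eq_norm x a).symm

theorem exists_forall_inner_le_and_sub_dist_le_of_notMem [CompleteSpace E] (hs : s.Nonempty)
    (hcl : IsClosed s) (hcv : Convex ℝ s) {u : E} (hu : u ∉ s) :
    ∃ w c, ‖w‖ = 1 ∧ (∀ a ∈ s, ⟪w, a⟫ ≤ c) ∧ ∀ x, infDist u s - dist x u ≤ ⟪w, x⟫ - c := by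
  obtain ⟨p, hp, hpmin⟩ := exists_norm_eq_iInf_of_complete_convex hs hcl.isComplete hcv u
  have hobtuse : ∀ a ∈ s, ⟪u - p, a - p⟫ ≤ 0 :=
    (norm_eq_iInf_iff_real_inner_le_zero hcv hp).mp hpmin
  have hnorm : 0 < ‖u - p‖ := norm_pos_iff.mpr (sub_ne_zero.mpr fun h => hu (h ▸ hp))
  set w := ‖u - p‖⁻¹ • (u - p)
  refine ⟨w, ⟪w, p⟫, ?_, fun a ha => ?_, fun x => ?_⟩
  · rw [norm_smul, norm_inv, norm_norm, inv_mul_cancel₀ hnorm.ne']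
  · have : ⟪w, a - p⟫ ≤ 0 := by
      rw [real_inner_smul_left]
      exact mul_nonpos_of_nonneg_of_nonpos (by positivity) (hobtuse a ha)
    rw [inner_sub_right] at this
    linarith
  · have hwup : ⟪w, u - p⟫ = ‖u - p‖ := by
      rw [real_inner_smul_left, real_inner_self_eq_norm_sq]
      field_simp
    have hwxu : -‖x - u‖ ≤ ⟪w, x - u⟫ := by
      have := neg_le_of_abs_le (abs_real_inner_le_norm w (x - u))
      rwa [norm_smul, norm_inv, norm_norm, inv_mul_cancel₀ hnorm.ne', one_mul] at this
    calc infDist u s - dist x u ≤ ‖u - p‖ - ‖x - u‖ := by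
          rw [← dist_eq_norm, ← dist_eq_norm]; linarith [infDist_le_dist_of_mem hp (x := u)]
      _ ≤ ⟪w, x - u⟫ + ⟪w, u - p⟫ := by linarith
      _ = ⟪w, x⟫ - ⟪w, p⟫ := by rw [inner_sub_right, inner_sub_right]; ring

theorem convexOn_infDist_sub_infDist_compl [CompleteSpace E] (hs : s.Nonempty)
    (hcl : IsClosed s) (hcv : Convex ℝ s) :
    ConvexOn ℝ univ fun x => infDist x s - infDist x sᶜ := by
  refine convexOn_univ_of_forall_exists_affine_minorant fun x ε hε => ?_
  rcases sᶜ.eq_empty_or_nonempty with hcompl | hcompl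
  · obtain rfl : s = univ := compl_empty_iff.mp hcompl
    refine ⟨0, fun y => ?_, ?_⟩ <;> simp [infDist_zero_of_mem (mem_univ _), hε.le]
  obtain ⟨u, hu, hxu⟩ : ∃ u ∉ s, infDist x s - infDist x sᶜ ≤ infDist u s - dist x u + ε := by
    by_cases hx : x ∈ s
    · obtain ⟨u, hu, hxu⟩ := (infDist_lt_iff hcompl).mp (lt_add_of_pos_right (infDist x sᶜ) hε)
      refine ⟨u, hu, ?_⟩
      rw [infDist_zero_of_mem hx]
      linarith [infDist_nonneg (x := u) (s := s)]
    · exact ⟨x, hx, by simp [infDist_zero_of_mem (mem_compl hx), hε.le]⟩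
  obtain ⟨w, c, hw, hsc, hminor⟩ := exists_forall_inner_le_and_sub_dist_le_of_notMem hs hcl hcv hu
  refine ⟨(innerₗ E w).toAffineMap - AffineMap.const ℝ E c, fun y => ?_, ?_⟩ <;>
    simp only [AffineMap.coe_sub, LinearMap.coe_toAffineMap, AffineMap.coe_const, Pi.sub_apply,
      innerₗ_apply_apply, Function.const_apply]
  · exact le_infDist_sub_infDist_compl_of_forall_inner_le hs hw hsc y
  · linarith [hminor x]

end InnerProductSpace

theorem interpolated_object_convex_and_between_general
    (v1 v2 : Set (EuclideanSpace ℝ (Fin 3)))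
    (h1ne : v1.Nonempty) (h2ne : v2.Nonempty)
    (h1cl : IsClosed v1) (h2cl : IsClosed v2)
    (h1cv : Convex ℝ v1) (h2cv : Convex ℝ v2)
    (f : ℝ → ℝ) (hf0 : f 0 = 0) (hfmono : Monotone f)
    (hfconv : ConvexOn ℝ Set.univ f) (hfpos : ∀ t : ℝ, 0 < t → 0 < f t)
    (α : ℝ) (hα : α ∈ Set.Icc (0 : ℝ) 1) :
    Convex ℝ {x | (1 - α) * f (sdf v1 x) + α * f (sdf v2 x) ≤ 0} ∧
    v1 ∩ v2 ⊆ {x | (1 - α) * f (sdf v1 x) + α * f (sdf v2 x) ≤ 0} ∧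
    {x | (1 - α) * f (sdf v1 x) + α * f (sdf v2 x) ≤ 0} ⊆ v1 ∪ v2 := by
  obtain ⟨hα0, hα1⟩ := hα
  have hconv : ∀ v : Set (EuclideanSpace ℝ (Fin 3)), v.Nonempty → IsClosed v → Convex ℝ v →
      ConvexOn ℝ univ (f ∘ sdf v) := fun v hne hcl hcv =>
    hfconv.monotone_comp hfmono (convexOn_infDist_sub_infDist_compl hne hcl hcv)
  refine ⟨?_, ?_, ?_⟩
  · simpa using (((hconv v1 h1ne h1cl h1cv).smul (sub_nonneg.mpr hα1)).add
      ((hconv v2 h2ne h2cl h2cv).smul hα0)).convex_le 0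
  · rintro x ⟨hx1, hx2⟩
    have h1 : f (sdf v1 x) ≤ 0 := hf0 ▸ hfmono (infDist_sub_infDist_compl_nonpos_of_mem hx1)
    have h2 : f (sdf v2 x) ≤ 0 := hf0 ▸ hfmono (infDist_sub_infDist_compl_nonpos_of_mem hx2)
    exact add_nonpos (mul_nonpos_of_nonneg_of_nonpos (sub_nonneg.mpr hα1) h1)
      (mul_nonpos_of_nonneg_of_nonpos hα0 h2)
  · intro x hx
    by_contra hx12
    obtain ⟨hx1, hx2⟩ := not_or.mp hx12
    have h1 := hfpos _ (infDist_sub_infDist_compl_pos_of_notMem h1ne h1cl hx1)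
    have h2 := hfpos _ (infDist_sub_infDist_compl_pos_of_notMem h2ne h2cl hx2)
    exact hx.not_gt <| (lt_min h1 h2).trans_le <|
      Convex.min_le_combo _ _ (sub_nonneg.mpr hα1) hα0 (sub_add_cancel 1 α)

/-- Proposition 1: given nonempty closed convex `v1, v2` with `v1 ∩ v2 ≠ ∅`, a shaping
function `f` (with `f 0 = 0`, `f` monotone nondecreasing, `f` convex, and additionally
`f t > 0` for `t > 0`), and `α ∈ [0,1]`, the interpolated object
`{x | (1−α)·f(SDF_{v1}(x)) + α·f(SDF_{v2}(x)) ≤ 0}` is convex and lies between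
`v1 ∩ v2` and `v1 ∪ v2`. -/
theorem interpolated_object_convex_and_between
    (v1 v2 : Set (EuclideanSpace ℝ (Fin 3)))
    (h1ne : v1.Nonempty) (h2ne : v2.Nonempty)
    (h1cl : IsClosed v1) (h2cl : IsClosed v2)
    (h1cv : Convex ℝ v1) (h2cv : Convex ℝ v2)
    (hint : (v1 ∩ v2).Nonempty)
    (f : ℝ → ℝ) (hf0 : f 0 = 0) (hfmono : Monotone f)
    (hfconv : ConvexOn ℝ Set.univ f) (hfpos : ∀ t : ℝ, 0 < t → 0 < f t)
    (α : ℝ) (hα : α ∈ Set.Icc (0 : ℝ) 1) :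
    Convex ℝ {x | (1 - α) * f (sdf v1 x) + α * f (sdf v2 x) ≤ 0} ∧
    v1 ∩ v2 ⊆ {x | (1 - α) * f (sdf v1 x) + α * f (sdf v2 x) ≤ 0} ∧
    {x | (1 - α) * f (sdf v1 x) + α * f (sdf v2 x) ≤ 0} ⊆ v1 ∪ v2 :=
  interpolated_object_convex_and_between_general v1 v2 h1ne h2ne h1cl h2cl h1cv h2cv f hf0 hfmono
    hfconv hfpos α hα
end

section
/- Let v be a nonempty convex subset of ℝ³ (EuclideanSpace ℝ (Fin 3)). Then the signed distance function x ↦ Metric.infDist x v − Metric.infDist x vᶜ is a convex function on all of ℝ³ (ConvexOn ℝ Set.univ). -/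
open Metric Set
open scoped RealInnerProductSpace

local notation "E" => EuclideanSpace ℝ (Fin 3)

/-- Claim A: lower affine bound. -/
lemma claimA {v : Set E} (hne : v.Nonempty) {u : E} (hu : ‖u‖ = 1) {c : ℝ}
    (hc : ∀ y ∈ v, ⟪u, y⟫ ≤ c) (x : E) :
    ⟪u, x⟫ - c ≤ infDist x v - infDist x vᶜ := by
  by_cases hx : x ∈ v
  · rw [infDist_zero_of_mem hx]
    set e := infDist x vᶜ with he
    have hball : ∀ w : E, dist x w < e → w ∈ v := by
      intro w hw
      by_contra hwv
      exact absurd (infDist_le_dist_of_mem (s := vᶜ) hwv) (not_le.2 hw)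
    have key : ∀ δ : ℝ, 0 < δ → ⟪u, x⟫ + e ≤ c + δ := by
      intro δ hδ
      rcases le_or_gt e δ with h | h
      · have := hc x hx
        linarith
      · have hmem : x + (e - δ) • u ∈ v := by
          apply hball
          rw [dist_eq_norm]
          have hxx : x - (x + (e - δ) • u) = -((e - δ) • u) := by abel
          rw [hxx, norm_neg, norm_smul, hu, mul_one, Real.norm_eq_abs,
            abs_of_pos (by linarith)]
          linarith
        have := hc _ hmem
        rw [inner_add_right, real_inner_smul_right, real_inner_self_eq_norm_sq, hu] at this
        nlinarith
    nlinarith [le_of_forall_pos_le_add key]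
  · rw [infDist_zero_of_mem (show x ∈ vᶜ from hx), sub_zero]
    have : ∀ y ∈ v, ⟪u, x⟫ - c ≤ dist x y := by
      intro y hy
      have h1 : ⟪u, x - y⟫ ≤ ‖u‖ * ‖x - y‖ := real_inner_le_norm u (x - y)
      rw [inner_sub_right] at h1
      rw [hu, one_mul, ← dist_eq_norm] at h1
      have := hc y hy
      linarith
    by_contra hlt
    rcases (infDist_lt_iff hne).1 (not_le.1 hlt) with ⟨y, hy, hd⟩
    exact absurd (this y hy) (not_le.2 hd)

/-- projection step: for w not in the closure of v, produce supporting functional. -/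
lemma proj_step {v : Set E} (hne : v.Nonempty) (hcv : Convex ℝ v) {w : E}
    (hw : w ∉ closure v) :
    ∃ u : E, ∃ c : ℝ, ‖u‖ = 1 ∧ (∀ y ∈ v, ⟪u, y⟫ ≤ c) ∧
      ⟪u, w⟫ - c = infDist w v := by
  set K := closure v with hK
  have hKne : K.Nonempty := hne.closure
  have hKcv : Convex ℝ K := hcv.closure
  have hKcomp : IsComplete K := (isClosed_closure).isComplete
  obtain ⟨p, hpK, hp⟩ := exists_norm_eq_iInf_of_complete_convex hKne hKcomp hKcv w
  have hvar : ∀ y ∈ K, ⟪w - p, y - p⟫ ≤ 0 :=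
    (norm_eq_iInf_iff_real_inner_le_zero hKcv hpK).1 hp
  have hdist : ‖w - p‖ = infDist w v := by
    rw [← infDist_closure (s := v), ← hK, infDist_eq_iInf, hp]
    simp only [dist_eq_norm]
  have hd0 : 0 < ‖w - p‖ := by
    rw [norm_pos_iff, sub_ne_zero]
    rintro rfl; exact hw hpK
  set d := ‖w - p‖ with hdd
  refine ⟨d⁻¹ • (w - p), ⟪d⁻¹ • (w - p), p⟫, ?_, ?_, ?_⟩
  · rw [norm_smul, Real.norm_eq_abs, abs_of_pos (by positivity), ← hdd,
      inv_mul_cancel₀ hd0.ne']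
  · intro y hy
    have := hvar y (subset_closure hy)
    have h2 : ⟪d⁻¹ • (w - p), y⟫ - ⟪d⁻¹ • (w - p), p⟫ = d⁻¹ * ⟪w - p, y - p⟫ := by
      rw [real_inner_smul_left, real_inner_smul_left, ← mul_sub, ← inner_sub_right]
    have h3 : d⁻¹ * ⟪w - p, y - p⟫ ≤ 0 :=
      mul_nonpos_of_nonneg_of_nonpos (by positivity) this
    linarith
  · have h2 : ⟪d⁻¹ • (w - p), w⟫ - ⟪d⁻¹ • (w - p), p⟫ = d⁻¹ * ⟪w - p, w - p⟫ := by
      rw [real_inner_smul_left, real_inner_smul_left, ← mul_sub, ← inner_sub_right]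
    rw [h2, real_inner_self_eq_norm_sq, ← hdd, ← hdist]
    field_simp

/-- For convex `v` in a finite-dimensional space, `interior (closure v) ⊆ v`. -/
lemma int_closure_subset {v : Set E} (hcv : Convex ℝ v) : interior (closure v) ⊆ v := by
  by_cases hi : (interior v).Nonempty
  · obtain ⟨y, hy⟩ := hi
    intro x hx
    by_cases hxy : x = y
    · exact interior_subset (hxy ▸ hy)
    · obtain ⟨δ, hδ, hball⟩ := Metric.isOpen_iff.1 isOpen_interior x hx
      have hxyn : 0 < ‖x - y‖ := by
        rw [norm_pos_iff, sub_ne_zero]; exact hxy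
      set t : ℝ := δ / (2 * ‖x - y‖) with ht
      have htpos : 0 < t := by positivity
      have hx2 : x + t • (x - y) ∈ closure v := by
        have : x + t • (x - y) ∈ Metric.ball x δ := by
          rw [Metric.mem_ball, dist_eq_norm]
          have : x + t • (x - y) - x = t • (x - y) := by abel
          rw [this, norm_smul, Real.norm_eq_abs, abs_of_pos htpos, ht]
          rw [div_mul_eq_mul_div, mul_comm]
          rw [mul_div_assoc]
          calc ‖x - y‖ * (δ / (2 * ‖x - y‖)) = δ / 2 := by field_simp
            _ < δ := by linarith
        exact interior_subset (hball this)
      have hcomb : (t / (1 + t)) • y + (1 / (1 + t)) • (x + t • (x - y)) = x := by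
        have h1t : (1 : ℝ) + t ≠ 0 := by positivity
        rw [smul_add, smul_smul, smul_sub]
        match_scalars <;> field_simp <;> ring
      have h1t : (0:ℝ) < 1 + t := by positivity
      have := hcv.combo_interior_closure_mem_interior (a := t / (1 + t))
        (b := 1 / (1 + t)) hy hx2
        (div_pos htpos h1t) (by positivity)
        (by field_simp; ring)
      rw [hcomb] at this
      exact interior_subset this
  · have hspan : ¬ affineSpan ℝ v = ⊤ := by
      rw [← hcv.interior_nonempty_iff_affineSpan_eq_top]
      exact fun h => hi h
    have hcl : closure v ⊆ (affineSpan ℝ v : Set E) := by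
      have : IsClosed (affineSpan ℝ v : Set E) :=
        AffineSubspace.closed_of_finiteDimensional _
      exact closure_minimal (subset_affineSpan ℝ v) this
    have hspan2 : ¬ (interior (closure v)).Nonempty := by
      rw [hcv.closure.interior_nonempty_iff_affineSpan_eq_top]
      intro h
      apply hspan
      have : affineSpan ℝ (closure v) ≤ affineSpan ℝ v :=
        affineSpan_le.2 hcl
      rw [h, top_le_iff] at this
      exact this
    intro x hx
    exact absurd ⟨x, hx⟩ hspan2

/-- Claim B: near-optimal supporting functional at any point. -/
lemma claimB {v : Set E} (hne : v.Nonempty) (hcv : Convex ℝ v) (hc : vᶜ.Nonempty)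
    (z : E) {ε : ℝ} (hε : 0 < ε) :
    ∃ u : E, ∃ c : ℝ, ‖u‖ = 1 ∧ (∀ y ∈ v, ⟪u, y⟫ ≤ c) ∧
      infDist z v - infDist z vᶜ ≤ ⟪u, z⟫ - c + ε := by
  by_cases hz : z ∈ closure v
  · have hzv : infDist z v = 0 := infDist_zero_of_mem_closure hz
    set e := infDist z vᶜ with he
    -- find w' ∈ vᶜ close to z
    obtain ⟨w', hw', hdw'⟩ := (infDist_lt_iff hc).1
      (show infDist z vᶜ < e + ε / 4 by rw [← he]; linarith)
    -- w' is not in the interior of the closure, hence close to the complement of the closure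
    have hw'2 : w' ∈ closure ((closure v)ᶜ) := by
      rw [closure_compl, mem_compl_iff]
      exact fun hmem => hw' (int_closure_subset hcv hmem)
    obtain ⟨w, hwK, hdw⟩ := Metric.mem_closure_iff.1 hw'2 (ε / 4) (by linarith)
    obtain ⟨u, c, hu, hcc, hval⟩ := proj_step hne hcv (show w ∉ closure v from hwK)
    refine ⟨u, c, hu, hcc, ?_⟩
    have hlow : -dist z w ≤ ⟪u, z - w⟫ := by
      have := real_inner_le_norm u (w - z)
      rw [hu, one_mul] at this
      have h2 : ⟪u, w - z⟫ = -⟪u, z - w⟫ := by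
        rw [← inner_neg_right]; congr 1; abel
      rw [h2] at this
      rw [← dist_eq_norm] at this
      rw [dist_comm] at this
      linarith
    have hzw : dist z w < e + ε / 2 := by
      calc dist z w ≤ dist z w' + dist w' w := dist_triangle _ _ _
        _ < (e + ε / 4) + ε / 4 := by linarith
        _ = e + ε / 2 := by ring
    have huzc : ⟪u, z⟫ - c = ⟪u, z - w⟫ + (⟪u, w⟫ - c) := by
      rw [inner_sub_right]; ring
    have hwv : 0 ≤ ⟪u, w⟫ - c := by rw [hval]; exact infDist_nonneg
    rw [hzv]
    linarith
  · obtain ⟨u, c, hu, hcc, hval⟩ := proj_step hne hcv hz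
    refine ⟨u, c, hu, hcc, ?_⟩
    rw [hval]
    have := infDist_nonneg (s := vᶜ) (x := z)
    linarith

/-- The SDF of a nonempty convex subset of ℝ³ is a convex function on all of ℝ³. -/
theorem sdf_convexOn (v : Set (EuclideanSpace ℝ (Fin 3)))
    (hne : v.Nonempty) (hcv : Convex ℝ v) :
    ConvexOn ℝ Set.univ (fun x => sdf v x) := by
  rcases eq_empty_or_nonempty vᶜ with hc | hc
  · have hv : v = univ := by
      rw [← compl_empty_iff, hc]
    have : (fun x : E => sdf v x) = fun _ => (0 : ℝ) := by
      funext x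
      simp [sdf, hv, infDist_zero_of_mem (mem_univ x), infDist_empty]
    rw [this]
    exact convexOn_const 0 convex_univ
  · refine ⟨convex_univ, ?_⟩
    intro x _ y _ a b ha hb hab
    simp only [smul_eq_mul]
    apply le_of_forall_pos_le_add
    intro ε hε
    obtain ⟨u, c, hu, hcc, hB⟩ := claimB hne hcv hc (a • x + b • y) hε
    have hAx := claimA hne hu hcc x
    have hAy := claimA hne hu hcc y
    have hinner : ⟪u, a • x + b • y⟫ = a * ⟪u, x⟫ + b * ⟪u, y⟫ := by
      rw [inner_add_right, real_inner_smul_right, real_inner_smul_right]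
    unfold sdf at *
    rw [hinner] at hB
    have hcab : a * c + b * c = c := by rw [← add_mul, hab, one_mul]
    have h1 := mul_le_mul_of_nonneg_left hAx ha
    have h2 := mul_le_mul_of_nonneg_left hAy hb
    rw [mul_sub, mul_sub] at h1 h2
    linarith
end

section
/- Let v1 and v2 be nonempty convex subsets of ℝ³ (EuclideanSpace ℝ (Fin 3)), let f : ℝ → ℝ be a shaping function, and let α ∈ [0,1]. Then the interpolated SDF, x ↦ (1−α)·f(SDF_{v1}(x)) + α·f(SDF_{v2}(x)), is a convex function on all of ℝ³ (ConvexOn ℝ Set.univ). -/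
/-!
If a ball `ball p ρ` (or, for `ρ = 0`, the point `p`) lies in `s`, then `dist z p - ρ` bounds the
signed distance of every `z` from above, and at each point such balls come arbitrarily close to
the signed distance. For convex `s` the convex combination of two such balls, with combined centre
and radius, again lies in `s`, while `(z, p, ρ) ↦ dist z p - ρ` is jointly convex; so the signed
distance is convex. A monotone convex shaping function and a convex average preserve this.
-/

open Metric Set

section PseudoMetric

variable {α : Type*} [PseudoMetricSpace α]

noncomputable def signedInfDist (s : Set α) (x : α) : ℝ :=
  infDist x s - infDist x sᶜ

@[simp]
lemma signedInfDist_empty : signedInfDist (∅ : Set α) = 0 := by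
  ext
  simp [signedInfDist, infDist_zero_of_mem (mem_univ _)]

@[simp]
lemma signedInfDist_univ : signedInfDist (univ : Set α) = 0 := by
  ext
  simp [signedInfDist, infDist_zero_of_mem (mem_univ _)]

lemma sub_dist_le_infDist_compl {s : Set α} {p : α} {ρ : ℝ}
    (hc : sᶜ.Nonempty) (hb : ball p ρ ⊆ s) (z : α) :
    ρ - dist z p ≤ infDist z sᶜ := by
  refine (le_infDist hc).2 fun y hy => ?_
  have : ρ ≤ dist y p := not_lt.1 fun h => hy (hb h)
  linarith [dist_triangle y z p, dist_comm y z]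

end PseudoMetric

variable {E : Type*} [NormedAddCommGroup E] [NormedSpace ℝ E]

section Certificate

/-! The condition `∀ w, ‖w‖ < 1 → p + ρ • w ∈ s` says `p ∈ s ∧ ball p ρ ⊆ s` for `ρ ≥ 0`, in a
form that is visibly stable under convex combinations of `(p, ρ)`. -/

variable {s : Set E} {p : E} {ρ : ℝ}

lemma infDist_le_dist_sub_of_ball_subset (hρ : 0 < ρ) (hb : ball p ρ ⊆ s) {z : E}
    (hz : ρ ≤ dist z p) : infDist z s ≤ dist z p - ρ := by
  have hD : 0 < dist p z := dist_comm z p ▸ hρ.trans_le hz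
  set q := AffineMap.lineMap p z (ρ / dist p z)
  have hq : q ∈ closure s := by
    refine closure_mono hb ?_
    rw [closure_ball p hρ.ne', mem_closedBall, dist_lineMap_left,
      Real.norm_of_nonneg (by positivity), div_mul_cancel₀ _ hD.ne']
  have hzq : dist z q = dist z p - ρ := by
    rw [dist_comm, dist_lineMap_right, Real.norm_of_nonneg, sub_mul, div_mul_cancel₀ _ hD.ne',
      one_mul, dist_comm]
    rwa [sub_nonneg, div_le_one hD, dist_comm]
  rw [← infDist_closure, ← hzq]
  exact infDist_le_dist_of_mem hq

lemma ball_subset_of_forall_add_smul_mem (hρ : 0 < ρ)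
    (h : ∀ w : E, ‖w‖ < 1 → p + ρ • w ∈ s) : ball p ρ ⊆ s := by
  intro y hy
  have hw : ‖ρ⁻¹ • (y - p)‖ < 1 := by
    rw [norm_smul, Real.norm_of_nonneg (inv_nonneg.2 hρ.le), ← dist_eq_norm, inv_mul_lt_one₀ hρ]
    exact hy
  simpa [smul_smul, hρ.ne'] using h _ hw

lemma forall_add_smul_mem_of_ball_subset (hρ : 0 ≤ ρ) (hp : p ∈ s) (hb : ball p ρ ⊆ s) :
    ∀ w : E, ‖w‖ < 1 → p + ρ • w ∈ s := by
  intro w hw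
  rcases hρ.eq_or_lt with rfl | hρ
  · simpa using hp
  refine hb ?_
  rw [mem_ball, dist_eq_norm, add_sub_cancel_left, norm_smul, Real.norm_of_nonneg hρ.le]
  exact mul_lt_of_lt_one_right hρ hw

lemma signedInfDist_le_dist_sub (hc : sᶜ.Nonempty) (hρ : 0 ≤ ρ)
    (h : ∀ w : E, ‖w‖ < 1 → p + ρ • w ∈ s) (z : E) :
    signedInfDist s z ≤ dist z p - ρ := by
  have hcompl : 0 ≤ infDist z sᶜ := infDist_nonneg
  rcases hρ.eq_or_lt with rfl | hρ
  · have hp : p ∈ s := by simpa using h 0 (by simp)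
    have := infDist_le_dist_of_mem (x := z) hp
    rw [signedInfDist]
    linarith
  have hb := ball_subset_of_forall_add_smul_mem hρ h
  rcases lt_or_ge (dist z p) ρ with hz | hz
  · have := sub_dist_le_infDist_compl hc hb z
    rw [signedInfDist, infDist_zero_of_mem (hb hz)]
    linarith
  · have := infDist_le_dist_sub_of_ball_subset hρ hb hz
    rw [signedInfDist]
    linarith

lemma exists_dist_sub_le_signedInfDist_add (hs : s.Nonempty) (x : E) {ε : ℝ} (hε : 0 < ε) :
    ∃ p ρ, 0 ≤ ρ ∧ (∀ w : E, ‖w‖ < 1 → p + ρ • w ∈ s) ∧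
      dist x p - ρ ≤ signedInfDist s x + ε := by
  by_cases hx : x ∈ s
  · refine ⟨x, infDist x sᶜ, infDist_nonneg,
      forall_add_smul_mem_of_ball_subset infDist_nonneg hx ball_infDist_compl_subset, ?_⟩
    rw [signedInfDist, infDist_zero_of_mem hx, dist_self]
    linarith
  · obtain ⟨p, hp, hxp⟩ := (infDist_lt_iff hs).1 (lt_add_of_pos_right (infDist x s) hε)
    refine ⟨p, 0, le_rfl, fun w _ => by simpa using hp, ?_⟩
    rw [signedInfDist, infDist_zero_of_mem (show x ∈ sᶜ from hx)]
    linarith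

lemma Convex.forall_add_smul_mem_combo (hs : Convex ℝ s) {q : E} {σ a b : ℝ}
    (hp : ∀ w : E, ‖w‖ < 1 → p + ρ • w ∈ s) (hq : ∀ w : E, ‖w‖ < 1 → q + σ • w ∈ s)
    (ha : 0 ≤ a) (hb : 0 ≤ b) (hab : a + b = 1) :
    ∀ w : E, ‖w‖ < 1 → a • p + b • q + (a * ρ + b * σ) • w ∈ s := by
  intro w hw
  convert hs (hp w hw) (hq w hw) ha hb hab using 1
  module

end Certificate

lemma dist_smul_add_smul_le (x y p q : E) {a b : ℝ} (ha : 0 ≤ a) (hb : 0 ≤ b) :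
    dist (a • x + b • y) (a • p + b • q) ≤ a * dist x p + b * dist y q := by
  calc dist (a • x + b • y) (a • p + b • q)
      ≤ dist (a • x) (a • p) + dist (b • y) (b • q) := dist_add_add_le _ _ _ _
    _ = a * dist x p + b * dist y q := by
      rw [dist_smul₀, dist_smul₀, Real.norm_of_nonneg ha, Real.norm_of_nonneg hb]

theorem Convex.convexOn_signedInfDist {s : Set E} (hs : Convex ℝ s) :
    ConvexOn ℝ univ (signedInfDist s) := by
  rcases s.eq_empty_or_nonempty with rfl | hne
  · rw [signedInfDist_empty]
    exact convexOn_const 0 convex_univ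
  rcases sᶜ.eq_empty_or_nonempty with hc | hc
  · rw [compl_empty_iff.1 hc, signedInfDist_univ]
    exact convexOn_const 0 convex_univ
  refine ⟨convex_univ, fun x _ y _ a b ha hb hab => le_of_forall_pos_le_add fun ε hε => ?_⟩
  obtain ⟨p, ρ, hρ, hp, hxp⟩ := exists_dist_sub_le_signedInfDist_add hne x hε
  obtain ⟨q, σ, hσ, hq, hyq⟩ := exists_dist_sub_le_signedInfDist_add hne y hε
  calc signedInfDist s (a • x + b • y)
      ≤ dist (a • x + b • y) (a • p + b • q) - (a * ρ + b * σ) :=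
        signedInfDist_le_dist_sub hc (by positivity)
          (hs.forall_add_smul_mem_combo hp hq ha hb hab) _
    _ ≤ a * (dist x p - ρ) + b * (dist y q - σ) := by
        linarith [dist_smul_add_smul_le x y p q ha hb]
    _ ≤ a * (signedInfDist s x + ε) + b * (signedInfDist s y + ε) := by gcongr
    _ = a • signedInfDist s x + b • signedInfDist s y + ε := by
        simp only [smul_eq_mul]
        linear_combination ε * hab

lemma ConvexOn.comp_of_monotone {F : Type*} [AddCommMonoid F] [Module ℝ F] {s : Set F}
    {f : F → ℝ} {g : ℝ → ℝ} (hg : ConvexOn ℝ univ g) (hg' : Monotone g)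
    (hf : ConvexOn ℝ s f) : ConvexOn ℝ s (g ∘ f) :=
  ⟨hf.1, fun _ hx _ hy _ _ ha hb hab =>
    (hg' (hf.2 hx hy ha hb hab)).trans (hg.2 trivial trivial ha hb hab)⟩

theorem interpolated_sdf_convexOn_general
    (v1 v2 : Set (EuclideanSpace ℝ (Fin 3)))
    (h1cv : Convex ℝ v1) (h2cv : Convex ℝ v2)
    (f : ℝ → ℝ) (hfmono : Monotone f)
    (hfconv : ConvexOn ℝ Set.univ f)
    (α : ℝ) (hα : α ∈ Set.Icc (0 : ℝ) 1) :
    ConvexOn ℝ Set.univ (fun x => (1 - α) * f (sdf v1 x) + α * f (sdf v2 x)) := by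
  have h1 := hfconv.comp_of_monotone hfmono h1cv.convexOn_signedInfDist
  have h2 := hfconv.comp_of_monotone hfmono h2cv.convexOn_signedInfDist
  exact (h1.smul (sub_nonneg.2 hα.2)).add (h2.smul hα.1)

/-- For nonempty convex `v1, v2`, a shaping function `f` and `α ∈ [0,1]`, the
interpolated SDF `x ↦ (1−α)·f(SDF_{v1}(x)) + α·f(SDF_{v2}(x))` is convex on ℝ³. -/
theorem interpolated_sdf_convexOn
    (v1 v2 : Set (EuclideanSpace ℝ (Fin 3)))
    (h1ne : v1.Nonempty) (h2ne : v2.Nonempty)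
    (h1cv : Convex ℝ v1) (h2cv : Convex ℝ v2)
    (f : ℝ → ℝ) (hf0 : f 0 = 0) (hfmono : Monotone f)
    (hfconv : ConvexOn ℝ Set.univ f)
    (α : ℝ) (hα : α ∈ Set.Icc (0 : ℝ) 1) :
    ConvexOn ℝ Set.univ (fun x => (1 - α) * f (sdf v1 x) + α * f (sdf v2 x)) :=
  interpolated_sdf_convexOn_general v1 v2 h1cv h2cv f hfmono hfconv α hα
end

section
/- Let v1 and v2 be subsets of ℝ³ (EuclideanSpace ℝ (Fin 3)), let f : ℝ → ℝ be a shaping function, and let α ∈ [0,1]. Then every point x ∈ v1 ∩ v2 satisfies (1−α)·f(SDF_{v1}(x)) + α·f(SDF_{v2}(x)) ≤ 0; that is, v1 ∩ v2 ⊆ v^α_{v1→v2}. -/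
/-- For any sets `v1, v2`, a shaping function `f` and `α ∈ [0,1]`, every point of
`v1 ∩ v2` lies in the interpolated object `{x | (1−α)·f(SDF_{v1} x) + α·f(SDF_{v2} x) ≤ 0}`. -/
theorem inter_subset_interpolated_object
    (v1 v2 : Set (EuclideanSpace ℝ (Fin 3)))
    (f : ℝ → ℝ) (hf0 : f 0 = 0) (hfmono : Monotone f)
    (hfconv : ConvexOn ℝ Set.univ f)
    (α : ℝ) (hα : α ∈ Set.Icc (0 : ℝ) 1) :
    v1 ∩ v2 ⊆ {x | (1 - α) * f (sdf v1 x) + α * f (sdf v2 x) ≤ 0} := by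
  rintro x ⟨hx1, hx2⟩
  have h1 : sdf v1 x ≤ 0 := by
    simp [sdf, Metric.infDist_zero_of_mem hx1]
    exact Metric.infDist_nonneg
  have h2 : sdf v2 x ≤ 0 := by
    simp [sdf, Metric.infDist_zero_of_mem hx2]
    exact Metric.infDist_nonneg
  have hf1 : f (sdf v1 x) ≤ 0 := hf0 ▸ hfmono h1
  have hf2 : f (sdf v2 x) ≤ 0 := hf0 ▸ hfmono h2
  have := hα.1; have := hα.2
  have : (1 - α) * f (sdf v1 x) ≤ 0 := mul_nonpos_of_nonneg_of_nonpos (by linarith) hf1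
  have : α * f (sdf v2 x) ≤ 0 := mul_nonpos_of_nonneg_of_nonpos (by linarith) hf2
  simp only [Set.mem_setOf_eq]
  linarith
end

section
/- Let v1 and v2 be nonempty closed subsets of ℝ³ (EuclideanSpace ℝ (Fin 3)), let f : ℝ → ℝ be a shaping function that additionally satisfies f(t) > 0 for all t > 0, and let α ∈ [0,1]. Then every point x with (1−α)·f(SDF_{v1}(x)) + α·f(SDF_{v2}(x)) ≤ 0 satisfies x ∈ v1 or x ∈ v2; that is, v^α_{v1→v2} ⊆ v1 ∪ v2. -/
/-- For nonempty closed `v1, v2`, a shaping function `f` with `f t > 0` for `t > 0`,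
and `α ∈ [0,1]`, the interpolated object is contained in `v1 ∪ v2`. -/
theorem interpolated_object_subset_union
    (v1 v2 : Set (EuclideanSpace ℝ (Fin 3)))
    (h1ne : v1.Nonempty) (h2ne : v2.Nonempty)
    (h1cl : IsClosed v1) (h2cl : IsClosed v2)
    (f : ℝ → ℝ) (hf0 : f 0 = 0) (hfmono : Monotone f)
    (hfconv : ConvexOn ℝ Set.univ f) (hfpos : ∀ t : ℝ, 0 < t → 0 < f t)
    (α : ℝ) (hα : α ∈ Set.Icc (0 : ℝ) 1) :
    {x | (1 - α) * f (sdf v1 x) + α * f (sdf v2 x) ≤ 0} ⊆ v1 ∪ v2 := by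
  intro x hx
  by_contra hc
  simp only [Set.mem_union, not_or] at hc
  obtain ⟨hx1, hx2⟩ := hc
  have hs1 : 0 < sdf v1 x := by
    have h := (h1cl.notMem_iff_infDist_pos h1ne).mp hx1
    have h0 : Metric.infDist x v1ᶜ = 0 := Metric.infDist_zero_of_mem hx1
    simp [sdf, h0, h]
  have hs2 : 0 < sdf v2 x := by
    have h := (h2cl.notMem_iff_infDist_pos h2ne).mp hx2
    have h0 : Metric.infDist x v2ᶜ = 0 := Metric.infDist_zero_of_mem hx2
    simp [sdf, h0, h]
  have hf1 := hfpos _ hs1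
  have hf2 := hfpos _ hs2
  obtain ⟨hα0, hα1⟩ := hα
  have hpos : 0 < (1 - α) * f (sdf v1 x) + α * f (sdf v2 x) := by
    rcases eq_or_lt_of_le hα0 with h | h
    · simp [← h, hf1]
    · have := mul_pos h hf2
      nlinarith [mul_nonneg (by linarith : (0:ℝ) ≤ 1 - α) hf1.le]
  simp only [Set.mem_setOf_eq] at hx
  linarith
end

section
/- Let v1 and v2 be nonempty closed subsets of ℝ³ (EuclideanSpace ℝ (Fin 3)) and let f : ℝ → ℝ be a shaping function with f(t) > 0 for all t > 0. Then the occupied space of the interpolated SDF at the endpoints recovers the original objects: {x | SDF^0_{v1→v2}(x) ≤ 0} = v1 and {x | SDF^1_{v1→v2}(x) ≤ 0} = v2. -/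
lemma sdf_key (v : Set (EuclideanSpace ℝ (Fin 3))) (hne : v.Nonempty) (hcl : IsClosed v)
    (f : ℝ → ℝ) (hf0 : f 0 = 0) (hfmono : Monotone f)
    (hfpos : ∀ t : ℝ, 0 < t → 0 < f t) (x : EuclideanSpace ℝ (Fin 3)) :
    f (sdf v x) ≤ 0 ↔ x ∈ v := by
  constructor
  · intro h
    by_contra hx
    have hpos : 0 < Metric.infDist x v :=
      (IsClosed.notMem_iff_infDist_pos hcl hne).mp hx
    have hz : Metric.infDist x vᶜ = 0 := Metric.infDist_zero_of_mem hx
    have : 0 < sdf v x := by simp [sdf, hz, hpos]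
    exact absurd h (not_le.mpr (hfpos _ this))
  · intro hx
    have h1 : Metric.infDist x v = 0 := Metric.infDist_zero_of_mem hx
    have h2 : sdf v x ≤ 0 := by
      simp [sdf, h1]; exact Metric.infDist_nonneg
    calc f (sdf v x) ≤ f 0 := hfmono h2
    _ = 0 := hf0

/-- For nonempty closed `v1, v2` and a shaping function `f` with `f t > 0` for `t > 0`,
the occupied space of the interpolated SDF at `α = 0` is `v1` and at `α = 1` is `v2`. -/
theorem interpolated_sdf_endpoints
    (v1 v2 : Set (EuclideanSpace ℝ (Fin 3)))
    (h1ne : v1.Nonempty) (h2ne : v2.Nonempty)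
    (h1cl : IsClosed v1) (h2cl : IsClosed v2)
    (f : ℝ → ℝ) (hf0 : f 0 = 0) (hfmono : Monotone f)
    (hfconv : ConvexOn ℝ Set.univ f) (hfpos : ∀ t : ℝ, 0 < t → 0 < f t) :
    {x | (1 - (0:ℝ)) * f (sdf v1 x) + (0:ℝ) * f (sdf v2 x) ≤ 0} = v1 ∧
    {x | (1 - (1:ℝ)) * f (sdf v1 x) + (1:ℝ) * f (sdf v2 x) ≤ 0} = v2 := by
  constructor <;> ext x <;> simp only [Set.mem_setOf_eq] <;> norm_num
  · exact sdf_key v1 h1ne h1cl f hf0 hfmono hfpos x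
  · exact sdf_key v2 h2ne h2cl f hf0 hfmono hfpos x
end

section
/- Let 𝒱 = {v_1, …, v_n} be nonempty closed subsets of ℝ³ (EuclideanSpace ℝ (Fin 3)) with union 𝒪_𝒱, let v^l_1, …, v^l_m be nonempty closed convex sets with attachment map σ : {1,…,m} → {1,…,n} such that each v_{σ(j)} is convex and v^l_j ∩ v_{σ(j)} ≠ ∅, let f : ℝ → ℝ be a shaping function with f(t) > 0 for all t > 0, and let α ∈ [0,1]. Then the occupied space of the interpolated collision constraint satisfies {x | min(SDF_𝒱(x), SDF^α_{v_{σ(1)}→v^l_1}(x), …, SDF^α_{v_{σ(m)}→v^l_m}(x)) ≤ 0} = 𝒪_𝒱 ∪ ⋃_{j=1}^m ( v^l_j ∩ v^α_{v_{σ(j)}→v^l_j} ). -/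
open Metric

lemma sdf_nonpos_of_mem {v : Set (EuclideanSpace ℝ (Fin 3))} {x : EuclideanSpace ℝ (Fin 3)}
    (hx : x ∈ v) : sdf v x ≤ 0 := by
  simp only [sdf, infDist_zero_of_mem hx, zero_sub, neg_nonpos]
  exact infDist_nonneg

lemma sdf_pos_of_notMem {v : Set (EuclideanSpace ℝ (Fin 3))} (hne : v.Nonempty)
    (hcl : IsClosed v) {x : EuclideanSpace ℝ (Fin 3)} (hx : x ∉ v) : 0 < sdf v x := by
  simpa only [sdf, infDist_zero_of_mem (Set.mem_compl hx), sub_zero]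
    using (hcl.notMem_iff_infDist_pos hne).1 hx

lemma sdf_nonpos_iff {v : Set (EuclideanSpace ℝ (Fin 3))} (hne : v.Nonempty)
    (hcl : IsClosed v) {x : EuclideanSpace ℝ (Fin 3)} : sdf v x ≤ 0 ↔ x ∈ v :=
  ⟨fun h => by_contra fun hx => (sdf_pos_of_notMem hne hcl hx).not_ge h, sdf_nonpos_of_mem⟩

lemma mem_or_mem_of_interpolated_sdf_nonpos {v w : Set (EuclideanSpace ℝ (Fin 3))}
    (hvne : v.Nonempty) (hvcl : IsClosed v) (hwne : w.Nonempty) (hwcl : IsClosed w)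
    {f : ℝ → ℝ} (hfpos : ∀ t : ℝ, 0 < t → 0 < f t) {α : ℝ} (hα : α ∈ Set.Icc (0 : ℝ) 1)
    {x : EuclideanSpace ℝ (Fin 3)} (hx : (1 - α) * f (sdf v x) + α * f (sdf w x) ≤ 0) :
    x ∈ v ∨ x ∈ w := by
  by_contra! ⟨hxv, hxw⟩
  have hpos : (1 - α) • f (sdf v x) + α • f (sdf w x) ∈ Set.Ioi (0 : ℝ) :=
    convex_Ioi 0 (hfpos _ (sdf_pos_of_notMem hvne hvcl hxv))
      (hfpos _ (sdf_pos_of_notMem hwne hwcl hxw)) (by linarith [hα.2]) hα.1 (by ring)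
  exact (Set.mem_Ioi.1 hpos).not_ge hx

theorem occupied_space_interpolated_constraint_general {n m : ℕ} (hn : 0 < n) (hm : 0 < m)
    (v : Fin n → Set (EuclideanSpace ℝ (Fin 3)))
    (hvne : ∀ i, (v i).Nonempty) (hvcl : ∀ i, IsClosed (v i))
    (vl : Fin m → Set (EuclideanSpace ℝ (Fin 3)))
    (hlne : ∀ j, (vl j).Nonempty) (hlcl : ∀ j, IsClosed (vl j))
    (σ : Fin m → Fin n)
    (f : ℝ → ℝ) (hfpos : ∀ t : ℝ, 0 < t → 0 < f t)
    (α : ℝ) (hα : α ∈ Set.Icc (0 : ℝ) 1) :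
    {x | min (Finset.univ.inf' ⟨⟨0, hn⟩, Finset.mem_univ _⟩ fun i => sdf (v i) x)
          (Finset.univ.inf' ⟨⟨0, hm⟩, Finset.mem_univ _⟩ fun j =>
            (1 - α) * f (sdf (v (σ j)) x) + α * f (sdf (vl j) x)) ≤ 0}
      = (⋃ i, v i) ∪
        ⋃ j, (vl j ∩ {x | (1 - α) * f (sdf (v (σ j)) x) + α * f (sdf (vl j) x) ≤ 0}) := by
  ext x
  -- `simp`/`rw` cannot use `Finset.inf'_le_iff` here: the statement's nonemptiness proofs are
  -- anonymous `Exists.intro`s, which match `Finset.Nonempty` only after unfolding it.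
  refine (min_le_iff.trans (or_congr (Finset.inf'_le_iff (α := ℝ) _)
    (Finset.inf'_le_iff (α := ℝ) _))).trans ?_
  simp only [Finset.mem_univ, true_and, sdf_nonpos_iff (hvne _) (hvcl _), Set.mem_union,
    Set.mem_iUnion, Set.mem_inter_iff]
  constructor
  · rintro (hxv | ⟨j, hj⟩)
    · exact Or.inl hxv
    · rcases mem_or_mem_of_interpolated_sdf_nonpos (hvne (σ j)) (hvcl (σ j)) (hlne j) (hlcl j)
        hfpos hα hj with hx | hx
      · exact Or.inl ⟨σ j, hx⟩
      · exact Or.inr ⟨j, hx, hj⟩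
  · rintro (hxv | ⟨j, -, hj⟩)
    exacts [Or.inl hxv, Or.inr ⟨j, hj⟩]

/-- The occupied space of the interpolated collision constraint: for nonempty closed
sets `v 0, …, v (n-1)` and nonempty closed convex leaf objects `vl 0, …, vl (m-1)`,
each attached via `σ` to a convex `v (σ j)` it intersects, a shaping function `f`
(with `f t > 0` for `t > 0`) and `α ∈ [0,1]`, the sublevel set of
`min(SDF_𝒱, SDF^α_{v (σ 0) → vl 0}, …, SDF^α_{v (σ (m-1)) → vl (m-1)})`
equals `𝒪_𝒱 ∪ ⋃ j, (vl j ∩ v^α_{v (σ j) → vl j})`. -/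
theorem occupied_space_interpolated_constraint {n m : ℕ} (hn : 0 < n) (hm : 0 < m)
    (v : Fin n → Set (EuclideanSpace ℝ (Fin 3)))
    (hvne : ∀ i, (v i).Nonempty) (hvcl : ∀ i, IsClosed (v i))
    (vl : Fin m → Set (EuclideanSpace ℝ (Fin 3)))
    (hlne : ∀ j, (vl j).Nonempty) (hlcl : ∀ j, IsClosed (vl j))
    (hlcv : ∀ j, Convex ℝ (vl j))
    (σ : Fin m → Fin n) (hσcv : ∀ j, Convex ℝ (v (σ j)))
    (hattach : ∀ j, (vl j ∩ v (σ j)).Nonempty)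
    (f : ℝ → ℝ) (hf0 : f 0 = 0) (hfmono : Monotone f)
    (hfconv : ConvexOn ℝ Set.univ f) (hfpos : ∀ t : ℝ, 0 < t → 0 < f t)
    (α : ℝ) (hα : α ∈ Set.Icc (0 : ℝ) 1) :
    {x | min (Finset.univ.inf' ⟨⟨0, hn⟩, Finset.mem_univ _⟩ fun i => sdf (v i) x)
          (Finset.univ.inf' ⟨⟨0, hm⟩, Finset.mem_univ _⟩ fun j =>
            (1 - α) * f (sdf (v (σ j)) x) + α * f (sdf (vl j) x)) ≤ 0}
      = (⋃ i, v i) ∪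
        ⋃ j, (vl j ∩ {x | (1 - α) * f (sdf (v (σ j)) x) + α * f (sdf (vl j) x) ≤ 0}) :=
  occupied_space_interpolated_constraint_general hn hm v hvne hvcl vl hlne hlcl σ f hfpos α hα
end
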